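/- The EPR Hamiltonian H^EPR(G) is unitarily equivalent (via the local unitary ⊗_j √X_j) to a Hamming-weight-preserving operator whose restriction to the Hamming-weight-k sector is the signless Laplacian Q(F_k(G)) of the k-th token graph. Consequently, the eigenvalue set of H^EPR(G) equals the union over 0 ≤ k ≤ n of the eigenvalue sets of Q(F_k(G)). -/

import Mathlib

open Matrix Finset

noncomputable section

/-- Computational basis states of `n` qubits. -/
abbrev QState (n : ℕ) := Fin n → Fin 2

/-- Pauli `X` matrix. -/
def pauliX : Matrix (Fin 2) (Fin 2) ℂ := !![0, 1; 1, 0]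

/-- Pauli `Y` matrix. -/
def pauliY : Matrix (Fin 2) (Fin 2) ℂ := !![0, -Complex.I; Complex.I, 0]

/-- Pauli `Z` matrix. -/
def pauliZ : Matrix (Fin 2) (Fin 2) ℂ := !![1, 0; 0, -1]

/-- The operator acting as `P` on qubit `i`, `Q` on qubit `j`, and the identity on all
other qubits of an `n`-qubit system. -/
def twoSite (n : ℕ) (i j : Fin n) (P Q : Matrix (Fin 2) (Fin 2) ℂ) :
    Matrix (QState n) (QState n) ℂ :=
  Matrix.of fun x y =>
    P (x i) (y i) * Q (x j) (y j) *
      ∏ l ∈ Finset.univ \ {i, j}, (if x l = y l then (1 : ℂ) else 0)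

/-- Quantum MaxCut term on the pair `(i,j)`: `(1/2)(I - XᵢXⱼ - YᵢYⱼ - ZᵢZⱼ)`. -/
def hQMC (n : ℕ) (i j : Fin n) : Matrix (QState n) (QState n) ℂ :=
  (1 / 2 : ℂ) • ((1 : Matrix (QState n) (QState n) ℂ)
    - twoSite n i j pauliX pauliX - twoSite n i j pauliY pauliY
    - twoSite n i j pauliZ pauliZ)

/-- XY term on the pair `(i,j)`: `(1/2)(I - XᵢXⱼ - YᵢYⱼ)`. -/
def hXY (n : ℕ) (i j : Fin n) : Matrix (QState n) (QState n) ℂ :=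
  (1 / 2 : ℂ) • ((1 : Matrix (QState n) (QState n) ℂ)
    - twoSite n i j pauliX pauliX - twoSite n i j pauliY pauliY)

/-- EPR term on the pair `(i,j)`: `(1/2)(I + XᵢXⱼ - YᵢYⱼ + ZᵢZⱼ)`. -/
def hEPR (n : ℕ) (i j : Fin n) : Matrix (QState n) (QState n) ℂ :=
  (1 / 2 : ℂ) • ((1 : Matrix (QState n) (QState n) ℂ)
    + twoSite n i j pauliX pauliX - twoSite n i j pauliY pauliY
    + twoSite n i j pauliZ pauliZ)

/-- Quantum MaxCut Hamiltonian of a weighted graph given by a symmetric weight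
function `w` (each edge is counted twice in the double sum, whence the factor `1/2`). -/
def HQMC (n : ℕ) (w : Fin n → Fin n → ℝ) : Matrix (QState n) (QState n) ℂ :=
  (1 / 2 : ℂ) • ∑ i, ∑ j, (w i j : ℂ) • hQMC n i j

/-- XY Hamiltonian of a weighted graph. -/
def HXY (n : ℕ) (w : Fin n → Fin n → ℝ) : Matrix (QState n) (QState n) ℂ :=
  (1 / 2 : ℂ) • ∑ i, ∑ j, (w i j : ℂ) • hXY n i j

/-- EPR Hamiltonian of a weighted graph. -/
def HEPR (n : ℕ) (w : Fin n → Fin n → ℝ) : Matrix (QState n) (QState n) ℂ :=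
  (1 / 2 : ℂ) • ∑ i, ∑ j, (w i j : ℂ) • hEPR n i j

/-- The largest (real) eigenvalue of a Hamiltonian: the supremum of the real numbers in
its complex spectrum. -/
def maxEigH {n : ℕ} (H : Matrix (QState n) (QState n) ℂ) : ℝ :=
  sSup {r : ℝ | (r : ℂ) ∈ spectrum ℂ H}

/-- Edge weight between vertices `A`, `B` of a token graph: nonzero exactly when the
symmetric difference of `A` and `B` is an edge `{a, b}` of `G` with `a ∈ A`, `b ∈ B`,
in which case it is `w a b`. -/
def tokenW {n : ℕ} (w : Fin n → Fin n → ℝ) (A B : Finset (Fin n)) : ℝ :=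
  ∑ a ∈ A \ B, ∑ b ∈ B \ A, if A \ {a} = B \ {b} then w a b else 0

/-- Vertices of the `k`-th token graph on `[n]`: the `k`-element subsets. -/
abbrev TokenVert (n k : ℕ) := {s : Finset (Fin n) // s.card = k}

/-- Weighted adjacency matrix of the `k`-th token graph `F_k(G)`. -/
def tokenA {n : ℕ} (w : Fin n → Fin n → ℝ) (k : ℕ) :
    Matrix (TokenVert n k) (TokenVert n k) ℝ :=
  Matrix.of fun A B => tokenW w A.1 B.1

/-- Weighted degree matrix of `F_k(G)`. -/
def tokenD {n : ℕ} (w : Fin n → Fin n → ℝ) (k : ℕ) :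
    Matrix (TokenVert n k) (TokenVert n k) ℝ :=
  Matrix.diagonal fun A => ∑ B : TokenVert n k, tokenW w A.1 B.1

/-- Weighted Laplacian of `F_k(G)`. -/
def tokenL {n : ℕ} (w : Fin n → Fin n → ℝ) (k : ℕ) :
    Matrix (TokenVert n k) (TokenVert n k) ℝ :=
  tokenD w k - tokenA w k

/-- Weighted signless Laplacian of `F_k(G)`. -/
def tokenQ {n : ℕ} (w : Fin n → Fin n → ℝ) (k : ℕ) :
    Matrix (TokenVert n k) (TokenVert n k) ℝ :=
  tokenD w k + tokenA w k

/-- Hamming weight of a computational basis state. -/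
def hammingWt {n : ℕ} (x : QState n) : ℕ := (Finset.univ.filter fun i => x i = 1).card

/-- The computational basis state associated with a subset `A ⊆ [n]`. -/
def chi {n : ℕ} (A : Finset (Fin n)) : QState n := fun i => if i ∈ A then 1 else 0

/-- The single-qubit unitary `√X`. -/
def sqrtX : Matrix (Fin 2) (Fin 2) ℂ :=
  (1 / 2 : ℂ) • !![1 + Complex.I, 1 - Complex.I; 1 - Complex.I, 1 + Complex.I]

/-- The `n`-fold tensor power `U = ⊗ⱼ √Xⱼ`. -/
def Umat (n : ℕ) : Matrix (QState n) (QState n) ℂ :=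
  Matrix.of fun x y => ∏ l, sqrtX (x l) (y l)


/-! Conjugation by `√X` fixes `X`, sends `Y ↦ Z` and `Z ↦ -Y`, so `U` turns each EPR term into
`(1/2)(I + XᵢXⱼ + YᵢYⱼ - ZᵢZⱼ)`. In the computational basis this operator has entry `1` between
two states that agree off `{i, j}` and are both antiparallel on `{i, j}`, and `0` elsewhere: it
is the identity on the antiparallel states plus the hop exchanging qubits `i` and `j`. Reading a
basis state as its support `A`, the identity parts add up to the weight of the cut `(A, Aᶜ)`,
which is the degree of `A` in the token graph, and the hops to the token-graph adjacency. Hence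
the conjugated Hamiltonian is block diagonal over Hamming weights with blocks `Q(F_k(G))`, and its
spectrum is the union of theirs, which are real since every `Q(F_k(G))` is symmetric. -/

theorem Finset.sum_sum_eq_two_nsmul_sum_sum_compl {α M : Type*} [Fintype α] [DecidableEq α]
    [AddCommMonoid M] (s : Finset α) {f : α → α → M} (hf : ∀ i j, f i j = f j i)
    (hs : ∀ i j, (i ∈ s ↔ j ∈ s) → f i j = 0) :
    ∑ i, ∑ j, f i j = 2 • ∑ i ∈ s, ∑ j ∈ sᶜ, f i j := by
  have row_in (i) (hi : i ∈ s) : ∑ j, f i j = ∑ j ∈ sᶜ, f i j := by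
    rw [← sum_add_sum_compl s, sum_eq_zero fun j hj => hs i j (iff_of_true hi hj), zero_add]
  have row_out (i) (hi : i ∉ s) : ∑ j, f i j = ∑ j ∈ s, f i j := by
    rw [← sum_add_sum_compl s,
      sum_eq_zero fun j hj => hs i j (iff_of_false hi (mem_compl.1 hj)), add_zero]
  rw [← sum_add_sum_compl s, sum_congr rfl row_in,
    sum_congr rfl fun i hi => row_out i (mem_compl.1 hi), sum_comm (s := sᶜ), two_nsmul]
  simp only [hf]

theorem Finset.card_insert_erase {α : Type*} [DecidableEq α] {A : Finset α} {a b : α}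
    (ha : a ∈ A) (hb : b ∉ A) : (insert b (A.erase a)).card = A.card := by
  rw [card_insert_of_notMem fun h => hb (mem_of_mem_erase h), card_erase_add_one ha]

theorem Finset.mem_and_sdiff_singleton_eq_iff {α : Type*} [DecidableEq α] {A B : Finset α}
    {a b : α} (hb : b ∉ A) (haB : a ∉ B) :
    b ∈ B ∧ A \ {a} = B \ {b} ↔ B = insert b (A.erase a) := by
  simp only [Finset.ext_iff, mem_sdiff, mem_singleton, mem_insert, mem_erase]
  grind

namespace Matrix

variable {o : Type*} [Fintype o] [DecidableEq o] {m : o → Type*} [∀ i, Fintype (m i)]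

theorem blockDiag'_blockDiagonal'_mul {R : Type*} [Semiring R] (N : ∀ i, Matrix (m i) (m i) R)
    (X : Matrix (Σ i, m i) (Σ i, m i) R) (i : o) :
    blockDiag' (blockDiagonal' N * X) i = N i * blockDiag' X i := by
  ext a b
  simp only [blockDiag'_apply, mul_apply, ← univ_sigma_univ, sum_sigma, blockDiagonal'_apply]
  rw [sum_eq_single i (fun j _ hj => by simp [Ne.symm hj]) (by simp)]
  simp

variable [∀ i, DecidableEq (m i)] {R : Type*} [CommRing R]

theorem isUnit_blockDiagonal'_iff (N : ∀ i, Matrix (m i) (m i) R) :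
    IsUnit (blockDiagonal' N) ↔ ∀ i, IsUnit (N i) := by
  refine ⟨fun h i => ?_, fun h => (Pi.isUnit_iff.2 h).map (blockDiagonal'RingHom m R)⟩
  obtain ⟨X, hX⟩ := isUnit_iff_exists_inv.1 h
  refine IsUnit.of_mul_eq_one (blockDiag' X i) ?_
  rw [← blockDiag'_blockDiagonal'_mul, hX, blockDiag'_one]
  rfl

theorem spectrum_blockDiagonal' (N : ∀ i, Matrix (m i) (m i) R) :
    spectrum R (blockDiagonal' N) = ⋃ i, spectrum R (N i) := by
  rw [← Pi.spectrum_eq]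
  ext z
  have h_algebraMap : blockDiagonal' (algebraMap R (∀ i, Matrix (m i) (m i) R) z)
      = algebraMap R _ z := by
    rw [Algebra.algebraMap_eq_smul_one, Algebra.algebraMap_eq_smul_one, blockDiagonal'_smul,
      ← blockDiagonal'_one]
  rw [spectrum.mem_iff, spectrum.mem_iff, ← h_algebraMap, ← blockDiagonal'_sub,
    isUnit_blockDiagonal'_iff, Pi.isUnit_iff]

end Matrix

theorem Matrix.spectrum_map_ofReal {ι : Type*} [Fintype ι] [DecidableEq ι]
    {M : Matrix ι ι ℝ} (hM : M.IsHermitian) :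
    spectrum ℂ (M.map ((↑) : ℝ → ℂ)) = ((↑) : ℝ → ℂ) '' spectrum ℝ M := by
  have mem_iff (r : ℝ) : (r : ℂ) ∈ spectrum ℂ (M.map ((↑) : ℝ → ℂ)) ↔ r ∈ spectrum ℝ M := by
    rw [mem_spectrum_iff_isRoot_charpoly, mem_spectrum_iff_isRoot_charpoly,
      ← Polynomial.isRoot_map_iff (f := Complex.ofRealHom) Complex.ofReal_injective,
      ← charpoly_map]
    rfl
  ext z
  refine ⟨fun hz => ?_, fun ⟨r, hr, hz⟩ => hz ▸ (mem_iff r).2 hr⟩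
  have hH := hM.map ((↑) : ℝ → ℂ) (fun _ => by simp)
  obtain ⟨_, ⟨i, rfl⟩, rfl⟩ := hH.spectrum_eq_image_range ▸ hz
  exact ⟨_, (mem_iff _).1 hz, rfl⟩

def kronProd {n : ℕ} (M : Fin n → Matrix (Fin 2) (Fin 2) ℂ) :
    Matrix (QState n) (QState n) ℂ :=
  Matrix.of fun x y => ∏ l, M l (x l) (y l)

section KronProd

variable {n : ℕ}

theorem kronProd_mul (M N : Fin n → Matrix (Fin 2) (Fin 2) ℂ) :
    kronProd M * kronProd N = kronProd (M * N) := by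
  ext x y
  simp only [kronProd, mul_apply, of_apply, Pi.mul_apply, ← prod_mul_distrib]
  rw [← Fintype.prod_sum fun l a => M l (x l) a * N l a (y l)]

theorem kronProd_conjTranspose (M : Fin n → Matrix (Fin 2) (Fin 2) ℂ) :
    (kronProd M)ᴴ = kronProd fun l => (M l)ᴴ := by
  ext x y
  simp only [kronProd, conjTranspose_apply, of_apply, star_prod]

theorem kronProd_one : kronProd (1 : Fin n → Matrix (Fin 2) (Fin 2) ℂ) = 1 := by
  ext x y
  simp [kronProd, one_apply, prod_boole, funext_iff]

theorem kronProd_conj (U M : Fin n → Matrix (Fin 2) (Fin 2) ℂ) :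
    kronProd U * kronProd M * (kronProd U)ᴴ = kronProd fun l => U l * M l * (U l)ᴴ := by
  rw [kronProd_conjTranspose, kronProd_mul, kronProd_mul]
  rfl

theorem twoSite_eq_kronProd {i j : Fin n} (hij : i ≠ j) (P Q : Matrix (Fin 2) (Fin 2) ℂ) :
    twoSite n i j P Q = kronProd fun l => if l = i then P else if l = j then Q else 1 := by
  ext x y
  rw [twoSite, kronProd, of_apply, of_apply, ← prod_sdiff (subset_univ {i, j}),
    prod_pair hij, if_pos rfl, if_neg hij.symm, if_pos rfl, mul_comm]
  congr 1
  refine prod_congr rfl fun l hl => ?_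
  simp only [mem_sdiff, mem_univ, mem_insert, mem_singleton, true_and, not_or] at hl
  rw [if_neg hl.1, if_neg hl.2, one_apply]

end KronProd

theorem sqrtX_mul_conjTranspose : sqrtX * sqrtXᴴ = 1 := by
  ext a b
  fin_cases a <;> fin_cases b <;> simp [sqrtX, mul_apply, Complex.ext_iff] <;> norm_num

theorem sqrtX_conj_pauliX : sqrtX * pauliX * sqrtXᴴ = pauliX := by
  ext a b
  fin_cases a <;> fin_cases b <;> simp [sqrtX, pauliX, mul_apply, Complex.ext_iff] <;> norm_num

theorem sqrtX_conj_pauliY : sqrtX * pauliY * sqrtXᴴ = pauliZ := by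
  ext a b
  fin_cases a <;> fin_cases b <;>
    simp [sqrtX, pauliY, pauliZ, mul_apply, Complex.ext_iff] <;> norm_num

theorem sqrtX_conj_pauliZ : sqrtX * pauliZ * sqrtXᴴ = -pauliY := by
  ext a b
  fin_cases a <;> fin_cases b <;>
    simp [sqrtX, pauliY, pauliZ, mul_apply, Complex.ext_iff] <;> norm_num

section Conjugation

variable {n : ℕ}

theorem Umat_eq_kronProd : Umat n = kronProd fun _ => sqrtX := rfl

theorem Umat_mem_unitaryGroup : Umat n ∈ unitaryGroup (QState n) ℂ := by
  rw [mem_unitaryGroup_iff, star_eq_conjTranspose, Umat_eq_kronProd, kronProd_conjTranspose,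
    kronProd_mul]
  simp only [Pi.mul_def, sqrtX_mul_conjTranspose]
  exact kronProd_one

theorem Umat_conj_twoSite {i j : Fin n} (hij : i ≠ j) (P Q : Matrix (Fin 2) (Fin 2) ℂ) :
    Umat n * twoSite n i j P Q * (Umat n)ᴴ
      = twoSite n i j (sqrtX * P * sqrtXᴴ) (sqrtX * Q * sqrtXᴴ) := by
  rw [twoSite_eq_kronProd hij, twoSite_eq_kronProd hij, Umat_eq_kronProd, kronProd_conj]
  congr with l : 1
  split_ifs <;> simp [sqrtX_mul_conjTranspose]

theorem twoSite_one_one {i j : Fin n} (hij : i ≠ j) : twoSite n i j 1 1 = 1 := by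
  rw [twoSite_eq_kronProd hij, ← kronProd_one]
  congr with l : 1
  split_ifs <;> rfl

theorem twoSite_neg_neg (i j : Fin n) (P Q : Matrix (Fin 2) (Fin 2) ℂ) :
    twoSite n i j (-P) (-Q) = twoSite n i j P Q := by
  ext x y
  simp only [twoSite, of_apply, Matrix.neg_apply, neg_mul_neg]

theorem twoSite_apply (i j : Fin n) (P Q : Matrix (Fin 2) (Fin 2) ℂ) (x y : QState n) :
    twoSite n i j P Q x y
      = P (x i) (y i) * Q (x j) (y j) * if ∀ l ∈ univ \ {i, j}, x l = y l then 1 else 0 := by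
  simp [twoSite, prod_boole]

theorem Umat_conj_hEPR {i j : Fin n} (hij : i ≠ j) :
    Umat n * hEPR n i j * (Umat n)ᴴ = (1 / 2 : ℂ) • (twoSite n i j 1 1
      + twoSite n i j pauliX pauliX + twoSite n i j pauliY pauliY
      - twoSite n i j pauliZ pauliZ) := by
  rw [hEPR, ← twoSite_one_one hij]
  simp only [Matrix.mul_smul, Matrix.smul_mul, Matrix.mul_add, Matrix.add_mul, Matrix.mul_sub,
    Matrix.sub_mul, Umat_conj_twoSite hij, Matrix.mul_one, sqrtX_mul_conjTranspose,
    sqrtX_conj_pauliX, sqrtX_conj_pauliY, sqrtX_conj_pauliZ, twoSite_neg_neg]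
  abel_nf

theorem Umat_conj_hEPR_apply {i j : Fin n} (hij : i ≠ j) (x y : QState n) :
    (Umat n * hEPR n i j * (Umat n)ᴴ) x y
      = if x i ≠ x j ∧ y i ≠ y j ∧ ∀ l ∈ univ \ {i, j}, x l = y l then 1 else 0 := by
  -- `(1/2)(II + XX + YY - ZZ)` is twice the projector onto `(|01⟩ + |10⟩)/√2`.
  have two_qubit (a b c d : Fin 2) :
      (1 / 2 : ℂ) * ((1 : Matrix (Fin 2) (Fin 2) ℂ) a b * (1 : Matrix (Fin 2) (Fin 2) ℂ) c d
        + pauliX a b * pauliX c d + pauliY a b * pauliY c d - pauliZ a b * pauliZ c d)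
        = if a ≠ c ∧ b ≠ d then 1 else 0 := by
    fin_cases a <;> fin_cases b <;> fin_cases c <;> fin_cases d <;>
      norm_num [pauliX, pauliY, pauliZ]
  rw [Umat_conj_hEPR hij]
  simp only [Matrix.smul_apply, Matrix.add_apply, Matrix.sub_apply, twoSite_apply, smul_eq_mul,
    ← add_mul, ← sub_mul, ← mul_assoc, two_qubit, ite_zero_mul_ite_zero, mul_one, and_assoc]

theorem Umat_conj_HEPR_apply {w : Fin n → Fin n → ℝ} (hdiag : ∀ i, w i i = 0)
    (x y : QState n) :
    (Umat n * HEPR n w * (Umat n)ᴴ) x y = (1 / 2 : ℂ) * ∑ i, ∑ j, (w i j : ℂ) *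
      if x i ≠ x j ∧ y i ≠ y j ∧ ∀ l ∈ univ \ {i, j}, x l = y l then 1 else 0 := by
  simp only [HEPR, Matrix.mul_smul, Matrix.smul_mul, Matrix.mul_sum, Matrix.sum_mul,
    Matrix.smul_apply, Matrix.sum_apply, smul_eq_mul]
  congr 1
  refine sum_congr rfl fun i _ => sum_congr rfl fun j _ => ?_
  rcases eq_or_ne i j with rfl | hij
  · simp [hdiag]
  · rw [Umat_conj_hEPR_apply hij]

end Conjugation

section Supports

variable {n : ℕ}

theorem chi_apply_eq_chi_apply_iff (A B : Finset (Fin n)) (i j : Fin n) :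
    chi A i = chi B j ↔ (i ∈ A ↔ j ∈ B) := by
  unfold chi
  split_ifs <;> simp_all

theorem chi_injective : Function.Injective (chi (n := n)) := fun A B h => by
  ext l
  exact (chi_apply_eq_chi_apply_iff A B l l).1 (congrFun h l)

theorem chi_filter_eq_one (x : QState n) : chi (univ.filter (x · = 1)) = x := by
  funext l
  simp only [chi, mem_filter, mem_univ, true_and]
  split_ifs with h
  · exact h.symm
  · omega

theorem hammingWt_chi (A : Finset (Fin n)) : hammingWt (chi A) = A.card :=
  congrArg card (chi_injective (chi_filter_eq_one (chi A)))

theorem chi_antiparallel_pair_iff {A B : Finset (Fin n)} {a b : Fin n} (ha : a ∈ A)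
    (hb : b ∉ A) :
    (chi A a ≠ chi A b ∧ chi B a ≠ chi B b ∧ ∀ l ∈ univ \ {a, b}, chi A l = chi B l)
      ↔ B = A ∨ B = insert b (A.erase a) := by
  simp only [ne_eq, chi_apply_eq_chi_apply_iff, ha, hb, mem_sdiff, mem_univ, mem_insert,
    mem_singleton, true_and, not_or, Finset.ext_iff, mem_erase]
  grind

end Supports

section TokenGraph

variable {n : ℕ}

/-- The degree of `A` in every token graph containing it. -/
def cutWeight (w : Fin n → Fin n → ℝ) (A : Finset (Fin n)) : ℝ :=
  ∑ a ∈ A, ∑ b ∈ Aᶜ, w a b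

theorem tokenW_eq_sum (w : Fin n → Fin n → ℝ) (A B : Finset (Fin n)) :
    tokenW w A B = ∑ a ∈ A, ∑ b ∈ Aᶜ, if B = insert b (A.erase a) then w a b else 0 := by
  rw [tokenW, sdiff_eq_filter, sum_filter]
  refine sum_congr rfl fun a ha => ?_
  rw [show B \ A = Aᶜ.filter (fun b => b ∈ B) by ext; simp [and_comm], sum_filter]
  by_cases haB : a ∈ B
  · rw [if_neg (not_not.2 haB)]
    refine (sum_eq_zero fun b hb => if_neg ?_).symm
    rintro rfl
    have hab : a = b := by simpa using haB
    exact mem_compl.1 hb (hab ▸ ha)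
  · rw [if_pos haB]
    refine sum_congr rfl fun b hb => ?_
    rw [← ite_and, if_congr (mem_and_sdiff_singleton_eq_iff (mem_compl.1 hb) haB) rfl rfl]

theorem tokenW_comm {w : Fin n → Fin n → ℝ} (hsymm : ∀ i j, w i j = w j i)
    (A B : Finset (Fin n)) : tokenW w A B = tokenW w B A := by
  rw [tokenW, tokenW, sum_comm]
  simp only [hsymm, eq_comm]

theorem tokenW_eq_zero_of_card_ne (w : Fin n → Fin n → ℝ) {A B : Finset (Fin n)}
    (hAB : A.card ≠ B.card) : tokenW w A B = 0 := by
  rw [tokenW_eq_sum]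
  refine sum_eq_zero fun a ha => sum_eq_zero fun b hb => if_neg ?_
  rintro rfl
  exact hAB (card_insert_erase ha (mem_compl.1 hb)).symm

theorem sum_tokenW_eq_cutWeight (w : Fin n → Fin n → ℝ) {k : ℕ} (A : TokenVert n k) :
    ∑ B : TokenVert n k, tokenW w A.1 B.1 = cutWeight w A.1 := by
  simp only [tokenW_eq_sum]
  rw [sum_comm]
  refine sum_congr rfl fun a ha => ?_
  rw [sum_comm]
  refine sum_congr rfl fun b hb => ?_
  have hcard : (insert b (A.1.erase a)).card = k :=
    (card_insert_erase ha (mem_compl.1 hb)).trans A.2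
  rw [Fintype.sum_eq_single (⟨_, hcard⟩ : TokenVert n k)
    fun B hB => if_neg fun h => hB (Subtype.ext h), if_pos rfl]

theorem tokenQ_apply (w : Fin n → Fin n → ℝ) {k : ℕ} (A B : TokenVert n k) :
    tokenQ w k A B = (if A = B then cutWeight w A.1 else 0) + tokenW w A.1 B.1 := by
  rw [tokenQ, Matrix.add_apply, tokenD, tokenA, of_apply, diagonal_apply]
  split_ifs with h
  · rw [sum_tokenW_eq_cutWeight]
  · rfl

theorem tokenQ_isHermitian {w : Fin n → Fin n → ℝ} (hsymm : ∀ i j, w i j = w j i) (k : ℕ) :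
    (tokenQ w k).IsHermitian := by
  ext A B
  rw [conjTranspose_apply, star_trivial, tokenQ_apply, tokenQ_apply, tokenW_comm hsymm]
  by_cases h : A = B
  · simp [h]
  · simp [h, Ne.symm h]

end TokenGraph

section BlockStructure

variable {n : ℕ} {w : Fin n → Fin n → ℝ}

theorem Umat_conj_HEPR_chi_apply (hsymm : ∀ i j, w i j = w j i) (hdiag : ∀ i, w i i = 0)
    (A B : Finset (Fin n)) :
    (Umat n * HEPR n w * (Umat n)ᴴ) (chi A) (chi B)
      = (((if A = B then cutWeight w A else 0) + tokenW w A B : ℝ) : ℂ) := by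
  rw [Umat_conj_HEPR_apply hdiag, sum_sum_eq_two_nsmul_sum_sum_compl A ?symm ?cut]
  case symm =>
    intro i j
    simp only [hsymm i j, ne_comm, pair_comm]
  case cut =>
    intro i j hij
    rw [if_neg fun h => h.1 ((chi_apply_eq_chi_apply_iff A A i j).2 hij), mul_zero]
  have hterm (a) (ha : a ∈ A) (b) (hb : b ∈ Aᶜ) : (w a b : ℂ) *
      (if chi A a ≠ chi A b ∧ chi B a ≠ chi B b ∧ ∀ l ∈ univ \ {a, b}, chi A l = chi B l
        then 1 else 0)
      = (((if A = B then w a b else 0) + if B = insert b (A.erase a) then w a b else 0 : ℝ)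
        : ℂ) := by
    have hne : A ≠ insert b (A.erase a) := fun h => mem_compl.1 hb (h ▸ mem_insert_self b _)
    simp only [chi_antiparallel_pair_iff ha (mem_compl.1 hb), eq_comm (a := B)]
    by_cases hA : A = B
    · subst hA
      simp [hne.symm]
    · by_cases hS : insert b (A.erase a) = B <;> simp [hA, hS]
  rw [sum_congr rfl fun a ha => sum_congr rfl (hterm a ha), two_nsmul, ← two_mul, ← mul_assoc,
    one_div, inv_mul_cancel₀ two_ne_zero, one_mul, tokenW_eq_sum, cutWeight]
  push_cast
  simp only [sum_add_distrib]
  congr 1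
  split_ifs <;> simp

theorem Umat_conj_HEPR_apply_eq_zero (hsymm : ∀ i j, w i j = w j i) (hdiag : ∀ i, w i i = 0)
    {x y : QState n} (h : hammingWt x ≠ hammingWt y) :
    (Umat n * HEPR n w * (Umat n)ᴴ) x y = 0 := by
  rw [← chi_filter_eq_one x, ← chi_filter_eq_one y, Umat_conj_HEPR_chi_apply hsymm hdiag,
    if_neg fun hxy => h (congrArg card hxy), tokenW_eq_zero_of_card_ne w h, add_zero,
    Complex.ofReal_zero]

theorem Umat_conj_HEPR_chi_apply_eq_tokenQ (hsymm : ∀ i j, w i j = w j i)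
    (hdiag : ∀ i, w i i = 0) {k : ℕ} (A B : TokenVert n k) :
    (Umat n * HEPR n w * (Umat n)ᴴ) (chi A.1) (chi B.1) = tokenQ w k A B := by
  rw [Umat_conj_HEPR_chi_apply hsymm hdiag, tokenQ_apply]
  simp only [Subtype.val_inj]

def tokenEquiv (n : ℕ) : (Σ k : Fin (n + 1), TokenVert n k) ≃ QState n :=
  Equiv.ofBijective (fun p => chi p.2.1) ⟨by
    rintro ⟨k, A, hA⟩ ⟨k', B, hB⟩ h
    obtain rfl : A = B := chi_injective h
    obtain rfl : k = k' := Fin.ext (hA.symm.trans hB)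
    rfl, fun x =>
    ⟨⟨⟨hammingWt x, Nat.lt_succ_of_le ((card_le_univ _).trans_eq (Fintype.card_fin n))⟩,
      ⟨_, rfl⟩⟩, chi_filter_eq_one x⟩⟩

theorem tokenEquiv_apply (p : Σ k : Fin (n + 1), TokenVert n k) :
    tokenEquiv n p = chi p.2.1 :=
  rfl

theorem Umat_conj_HEPR_submatrix_tokenEquiv (hsymm : ∀ i j, w i j = w j i)
    (hdiag : ∀ i, w i i = 0) :
    (Umat n * HEPR n w * (Umat n)ᴴ).submatrix (tokenEquiv n) (tokenEquiv n)
      = blockDiagonal' fun k : Fin (n + 1) => (tokenQ w k).map ((↑) : ℝ → ℂ) := by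
  ext ⟨k, A⟩ ⟨k', B⟩
  rw [submatrix_apply, tokenEquiv_apply, tokenEquiv_apply]
  rcases eq_or_ne k k' with rfl | hk
  · rw [blockDiagonal'_apply_eq, map_apply, Umat_conj_HEPR_chi_apply_eq_tokenQ hsymm hdiag]
  · rw [blockDiagonal'_apply_ne _ _ _ hk, Umat_conj_HEPR_apply_eq_zero hsymm hdiag]
    rw [hammingWt_chi, hammingWt_chi, A.2, B.2]
    exact fun h => hk (Fin.ext h)

end BlockStructure

theorem HEPR_eq_directSum_tokenQ_general (n : ℕ) (w : Fin n → Fin n → ℝ)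
    (hsymm : ∀ i j, w i j = w j i)
    (hdiag : ∀ i, w i i = 0) :
    (∀ x y : QState n, hammingWt x ≠ hammingWt y →
      (Umat n * HEPR n w * (Umat n)ᴴ) x y = 0) ∧
    (∀ (k : ℕ) (A B : Finset (Fin n)) (hA : A.card = k) (hB : B.card = k),
      (Umat n * HEPR n w * (Umat n)ᴴ) (chi A) (chi B)
        = ((tokenQ w k ⟨A, hA⟩ ⟨B, hB⟩ : ℝ) : ℂ)) ∧
    spectrum ℂ (HEPR n w)
      = ⋃ k : Fin (n + 1), (fun r : ℝ => (r : ℂ)) '' spectrum ℝ (tokenQ w k.1) := by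
  refine ⟨fun x y => Umat_conj_HEPR_apply_eq_zero hsymm hdiag,
    fun k A B hA hB => Umat_conj_HEPR_chi_apply_eq_tokenQ hsymm hdiag ⟨A, hA⟩ ⟨B, hB⟩, ?_⟩
  let U : unitary (Matrix (QState n) (QState n) ℂ) := ⟨Umat n, Umat_mem_unitaryGroup⟩
  calc spectrum ℂ (HEPR n w)
      = spectrum ℂ (Umat n * HEPR n w * (Umat n)ᴴ) :=
        (Unitary.spectrum_star_right_conjugate (U := U)).symm
    _ = spectrum ℂ ((Umat n * HEPR n w * (Umat n)ᴴ).submatrix (tokenEquiv n) (tokenEquiv n)) :=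
        (AlgEquiv.spectrum_eq (reindexAlgEquiv ℂ ℂ (tokenEquiv n).symm) _).symm
    _ = _ := by
      rw [Umat_conj_HEPR_submatrix_tokenEquiv hsymm hdiag, spectrum_blockDiagonal']
      simp only [spectrum_map_ofReal (tokenQ_isHermitian hsymm _)]

/-- The EPR Hamiltonian is unitarily equivalent, via `U = ⊗ⱼ √Xⱼ`, to a Hamming-weight
preserving operator whose weight-`k` block is the signless Laplacian `Q(F_k(G))` of the
`k`-th token graph; consequently its eigenvalue set is the union over `0 ≤ k ≤ n` of the
eigenvalue sets of the `Q(F_k(G))`. -/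
theorem HEPR_eq_directSum_tokenQ (n : ℕ) (w : Fin n → Fin n → ℝ)
    (hsymm : ∀ i j, w i j = w j i) (hnonneg : ∀ i j, 0 ≤ w i j)
    (hdiag : ∀ i, w i i = 0) :
    (∀ x y : QState n, hammingWt x ≠ hammingWt y →
      (Umat n * HEPR n w * (Umat n)ᴴ) x y = 0) ∧
    (∀ (k : ℕ) (A B : Finset (Fin n)) (hA : A.card = k) (hB : B.card = k),
      (Umat n * HEPR n w * (Umat n)ᴴ) (chi A) (chi B)
        = ((tokenQ w k ⟨A, hA⟩ ⟨B, hB⟩ : ℝ) : ℂ)) ∧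
    spectrum ℂ (HEPR n w)
      = ⋃ k : Fin (n + 1), (fun r : ℝ => (r : ℂ)) '' spectrum ℝ (tokenQ w k.1) :=
  HEPR_eq_directSum_tokenQ_general n w hsymm hdiag
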